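/- Define the infinite binary word W = 1 0^(r(1)-1) 1 0^(r(2)-1) 1 0^(r(3)-1) ⋯, where r(k) = ν₂(k)+1 is the ruler function and 0^m denotes m zeros. Then W equals the infinite word E_∞ where E_0 = "1" and E_{n+1} = E_n ++ E_n ++ "0". -/

import Mathlib

/-!
Cutting W into its blocks `1 0^(r(k)-1)`, the word `E_n` is the concatenation of the first `2^n`
blocks. Indeed `r(2^n + t) = r(t)` for `0 < t < 2^n`, so blocks `2^n + 1, …, 2^(n+1) - 1` repeat
blocks `1, …, 2^n - 1`, while block `2^(n+1)` is block `2^n` followed by one more `0`. So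
each `E_n` is a prefix of W, and prefixes of one word are comparable.
-/

/-- The ruler function r(k) = ν₂(k) + 1. -/
def ruler (k : ℕ) : ℕ := padicValNat 2 k + 1

/-- E_0 = "1", E_{n+1} = E_n ++ E_n ++ "0". -/
def Eword : ℕ → List ℕ
  | 0 => [1]
  | n + 1 => Eword n ++ Eword n ++ [0]

/-- The finite partial words 1 0^(r(1)-1) 1 0^(r(2)-1) ⋯ 1 0^(r(m)-1) of the
    infinite word W. -/
def Wpartial (m : ℕ) : List ℕ :=
  ((List.range m).map fun k => 1 :: List.replicate (ruler (k + 1) - 1) 0).flatten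

theorem padicValNat_add_of_lt {p a b : ℕ} [Fact p.Prime] (hb : b ≠ 0)
    (h : padicValNat p b < padicValNat p a) : padicValNat p (a + b) = padicValNat p b := by
  have ha : a ≠ 0 := by rintro rfl; simp at h
  have key := padicValRat.add_eq_of_lt (p := p) (q := (b : ℚ)) (r := (a : ℚ))
    (by positivity) (by positivity) (by positivity)
    (by simpa only [padicValRat.of_nat, Nat.cast_lt])
  rw [add_comm, ← Nat.cast_add] at key
  simpa only [padicValRat.of_nat, Nat.cast_inj] using key

theorem padicValNat_pow_add {p n t : ℕ} [hp : Fact p.Prime] (ht : t ≠ 0) (htn : t < p ^ n) :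
    padicValNat p (p ^ n + t) = padicValNat p t := by
  refine padicValNat_add_of_lt ht ?_
  rw [padicValNat.prime_pow, ← Nat.pow_lt_pow_iff_right hp.out.one_lt]
  exact (Nat.le_of_dvd (Nat.pos_of_ne_zero ht) pow_padicValNat_dvd).trans_lt htn

theorem ruler_two_pow (n : ℕ) : ruler (2 ^ n) = n + 1 := by
  simp [ruler]

theorem ruler_two_pow_add {n t : ℕ} (ht : t ≠ 0) (htn : t < 2 ^ n) :
    ruler (2 ^ n + t) = ruler t := by
  rw [ruler, ruler, padicValNat_pow_add ht htn]

theorem Wpartial_succ (m : ℕ) :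
    Wpartial (m + 1) = Wpartial m ++ 1 :: List.replicate (ruler (m + 1) - 1) 0 := by
  simp [Wpartial, List.range_succ]

theorem Wpartial_prefix_of_le {a b : ℕ} (h : a ≤ b) : Wpartial a <+: Wpartial b := by
  obtain ⟨k, rfl⟩ := Nat.exists_eq_add_of_le h
  simp only [Wpartial, List.range_add, List.map_append, List.flatten_append]
  exact List.prefix_append _ _

theorem Wpartial_two_pow_add {n t : ℕ} (htn : t < 2 ^ n) :
    Wpartial (2 ^ n + t) = Wpartial (2 ^ n) ++ Wpartial t := by
  induction t with
  | zero => simp [Wpartial]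
  | succ t ih =>
    rw [← Nat.add_assoc, Wpartial_succ, ih (by omega), Wpartial_succ, Nat.add_assoc,
      ruler_two_pow_add (by omega) htn, List.append_assoc]

theorem Wpartial_two_pow_succ (n : ℕ) :
    Wpartial (2 ^ (n + 1)) = Wpartial (2 ^ n) ++ Wpartial (2 ^ n) ++ [0] := by
  obtain ⟨k, hk⟩ : ∃ k, 2 ^ n = k + 1 := Nat.exists_eq_succ_of_ne_zero (by positivity)
  have hlast : Wpartial (2 ^ n) = Wpartial k ++ 1 :: List.replicate n 0 := by
    rw [hk, Wpartial_succ, ← hk, ruler_two_pow, Nat.add_sub_cancel]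
  have hsplit : 2 ^ (n + 1) = 2 ^ n + k + 1 := by rw [pow_succ]; omega
  rw [hsplit, Wpartial_succ, Wpartial_two_pow_add (by omega), ← hsplit, ruler_two_pow, hlast]
  simp [List.replicate_succ']

theorem Eword_eq_Wpartial (n : ℕ) : Eword n = Wpartial (2 ^ n) := by
  induction n with
  | zero => simp [Eword, Wpartial, ruler]
  | succ n ih => rw [Eword, ih, Wpartial_two_pow_succ]

/-- Two infinite words are equal iff every finite prefix of one is comparable with every finite
prefix of the other. -/
theorem Winfinite_eq_Einfinite :
    ∀ m n : ℕ, Wpartial m <+: Eword n ∨ Eword n <+: Wpartial m := by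
  intro m n
  rw [Eword_eq_Wpartial]
  exact (le_total m (2 ^ n)).imp Wpartial_prefix_of_le Wpartial_prefix_of_le
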